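/- arXiv:2012.12196 — 2 statements merged into one kernel-verified Lean document; each statement's English description precedes it below -/
import Mathlib

section
/- Let R₁ and R₂ be the 2×2 rotation matrices with angles θ₁ and θ₂, and let σ, σ' ∈ (-1,1). If R₁ · diag(1, σ') · R₂ᵀ = diag(1, σ), then sin θ₁ = 0; consequently R₁ = ±I. -/
open Matrix Real

theorem stmt_5 (θ₁ θ₂ σ σ' : ℝ) (hσ : |σ| < 1) (hσ' : |σ'| < 1)
    (R₁ R₂ : Matrix (Fin 2) (Fin 2) ℝ)
    (hR₁ : R₁ = !![cos θ₁, sin θ₁; -sin θ₁, cos θ₁])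
    (hR₂ : R₂ = !![cos θ₂, sin θ₂; -sin θ₂, cos θ₂])
    (h : R₁ * diagonal ![1, σ'] * R₂ᵀ = diagonal ![1, σ]) :
    sin θ₁ = 0 ∧ (R₁ = 1 ∨ R₁ = -1) := by
  subst hR₁ hR₂
  have hd : (diagonal ![1, σ'] : Matrix (Fin 2) (Fin 2) ℝ) = !![1, 0; 0, σ'] := by
    ext i j; fin_cases i <;> fin_cases j <;> simp [Matrix.diagonal]
  have hd2 : (diagonal ![1, σ] : Matrix (Fin 2) (Fin 2) ℝ) = !![1, 0; 0, σ] := by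
    ext i j; fin_cases i <;> fin_cases j <;> simp [Matrix.diagonal]
  rw [hd, hd2] at h
  rw [show (!![cos θ₂, sin θ₂; -sin θ₂, cos θ₂])ᵀ = !![cos θ₂, -sin θ₂; sin θ₂, cos θ₂] by
    ext i j; fin_cases i <;> fin_cases j <;> simp] at h
  rw [show (!![cos θ₁, sin θ₁; -sin θ₁, cos θ₁] * !![1, 0; 0, σ'] : Matrix (Fin 2) (Fin 2) ℝ)
      = !![cos θ₁, σ' * sin θ₁; -sin θ₁, σ' * cos θ₁] by
    rw [Matrix.mul_fin_two]; ring_nf] at h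
  rw [Matrix.mul_fin_two, ← Matrix.ext_iff] at h
  have e00 := h 0 0
  have e01 := h 0 1
  have e10 := h 1 0
  simp at e00 e01 e10
  have p1 := sin_sq_add_cos_sq θ₁
  have p2 := sin_sq_add_cos_sq θ₂
  obtain ⟨hσ'1, hσ'2⟩ := abs_lt.mp hσ'
  have key : sin θ₁ * cos θ₂ * (1 - σ' ^ 2) = 0 := by nlinarith [e01, e10]
  have hne : (1 : ℝ) - σ' ^ 2 ≠ 0 := by nlinarith
  have had : sin θ₁ * cos θ₂ = 0 := by
    rcases mul_eq_zero.mp key with h' | h'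
    · exact h'
    · exact absurd h' hne
  have hbc : cos θ₁ * sin θ₂ = 0 := by
    have : cos θ₁ * sin θ₂ = σ' * (sin θ₁ * cos θ₂) := by linarith
    rw [this, had, mul_zero]
  have hs1 : sin θ₁ = 0 := by
    rcases mul_eq_zero.mp had with h' | h'
    · exact h'
    · -- cos θ₂ = 0
      exfalso
      have hs2 : sin θ₂ ^ 2 = 1 := by nlinarith
      have hc1 : cos θ₁ = 0 := by
        rcases mul_eq_zero.mp hbc with h'' | h''
        · exact h''
        · nlinarith
      have hs1sq : sin θ₁ ^ 2 = 1 := by nlinarith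
      have he : σ' * (sin θ₁ * sin θ₂) = 1 := by rw [hc1] at e00; linarith
      have hsq : σ' ^ 2 * (sin θ₁ ^ 2 * sin θ₂ ^ 2) = 1 := by nlinarith [he]
      rw [hs1sq, hs2] at hsq; nlinarith [hsq]
  refine ⟨hs1, ?_⟩
  have hc1 : (cos θ₁ - 1) * (cos θ₁ + 1) = 0 := by nlinarith
  rcases mul_eq_zero.mp hc1 with h' | h'
  · left
    have hc : cos θ₁ = 1 := by linarith
    rw [hc, hs1, Matrix.one_fin_two]; norm_num
  · right
    have hc : cos θ₁ = -1 := by linarith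
    have hneg : (-1 : Matrix (Fin 2) (Fin 2) ℝ) = !![-1, 0; 0, -1] := by
      rw [show (-1 : Matrix (Fin 2) (Fin 2) ℝ) = -(1 : Matrix (Fin 2) (Fin 2) ℝ) from rfl,
        Matrix.one_fin_two]
      norm_num
    rw [hc, hs1, hneg]; norm_num
end

section
/- Let θ ∈ ℝ, σ, σ' nonzero reals, R₁ the rotation matrix with angle θ, and define R₂ = diag(1, 1/σ') · R₁ᵀ · diag(1, σ). If det(R₂ R₂ᵀ − I) = 0 and σ² ≠ 1 and σ'² ≠ 1, then sin θ = 0. -/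
open Matrix Real

/-!
For a `2 × 2` matrix `A`, `det (A Aᵀ - 1) = (det A)² - ‖A‖²_F + 1`. For
`R₂ = diag(1, a) R₁ᵀ diag(1, b)` we have `det R₂ = ab` and
`‖R₂‖²_F = cos² θ + (a² + b²) sin² θ + a²b² cos² θ`, so `det (R₂ R₂ᵀ - 1)` factors as
`sin² θ (a² - 1)(b² - 1)`, and the last two factors are nonzero.
-/

theorem Matrix.det_sub_one_fin_two {R : Type*} [CommRing R] (A : Matrix (Fin 2) (Fin 2) R) :
    (A - 1).det = A.det - A.trace + 1 := by
  rw [det_fin_two, det_fin_two, trace_fin_two]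
  simp
  ring

theorem Matrix.det_mul_transpose_sub_one_fin_two {R : Type*} [CommRing R]
    (A : Matrix (Fin 2) (Fin 2) R) :
    (A * Aᵀ - 1).det = A.det ^ 2 - ∑ i, ∑ j, A i j ^ 2 + 1 := by
  rw [det_sub_one_fin_two, det_mul, det_transpose, trace]
  simp [mul_apply, sq]

noncomputable def scaledRotation (θ a b : ℝ) : Matrix (Fin 2) (Fin 2) ℝ :=
  diagonal ![1, a] * (!![cos θ, -sin θ; sin θ, cos θ])ᵀ * diagonal ![1, b]

theorem scaledRotation_eq (θ a b : ℝ) :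
    scaledRotation θ a b = !![cos θ, b * sin θ; -(a * sin θ), a * b * cos θ] := by
  ext i j
  fin_cases i <;> fin_cases j <;> simp [scaledRotation, mul_apply] <;> ring

theorem det_scaledRotation_mul_transpose_sub_one (θ a b : ℝ) :
    (scaledRotation θ a b * (scaledRotation θ a b)ᵀ - 1).det =
      sin θ ^ 2 * (a ^ 2 - 1) * (b ^ 2 - 1) := by
  rw [det_mul_transpose_sub_one_fin_two, scaledRotation_eq, det_fin_two_of]
  simp [Fin.sum_univ_two]
  linear_combination (a ^ 2 * b ^ 2 * (sin θ ^ 2 + cos θ ^ 2) - 1) * sin_sq_add_cos_sq θ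

theorem stmt_6_general (θ σ σ' : ℝ)
    (hσ1 : σ ^ 2 ≠ 1) (hσ'1 : σ' ^ 2 ≠ 1)
    (R₁ R₂ : Matrix (Fin 2) (Fin 2) ℝ)
    (hR₁ : R₁ = !![cos θ, -sin θ; sin θ, cos θ])
    (hR₂ : R₂ = diagonal ![1, 1 / σ'] * R₁ᵀ * diagonal ![1, σ])
    (h : (R₂ * R₂ᵀ - 1).det = 0) :
    sin θ = 0 := by
  subst hR₁
  have hR₂' : R₂ = scaledRotation θ (1 / σ') σ := hR₂
  rw [hR₂', det_scaledRotation_mul_transpose_sub_one] at h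
  have hσ : σ ^ 2 - 1 ≠ 0 := sub_ne_zero.2 hσ1
  have hσ' : (1 / σ') ^ 2 - 1 ≠ 0 := by rwa [sub_ne_zero, one_div, inv_pow, inv_ne_one]
  simpa only [mul_eq_zero, hσ, hσ', or_false, pow_eq_zero_iff, ne_eq, OfNat.ofNat_ne_zero,
    not_false_eq_true] using h

theorem stmt_6 (θ σ σ' : ℝ) (hσ : σ ≠ 0) (hσ' : σ' ≠ 0)
    (hσ1 : σ ^ 2 ≠ 1) (hσ'1 : σ' ^ 2 ≠ 1)
    (R₁ R₂ : Matrix (Fin 2) (Fin 2) ℝ)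
    (hR₁ : R₁ = !![cos θ, -sin θ; sin θ, cos θ])
    (hR₂ : R₂ = diagonal ![1, 1 / σ'] * R₁ᵀ * diagonal ![1, σ])
    (h : (R₂ * R₂ᵀ - 1).det = 0) :
    sin θ = 0 :=
  stmt_6_general θ σ σ' hσ1 hσ'1 R₁ R₂ hR₁ hR₂ h
end
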